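/- arXiv:2211.08079 — 5 statements merged into one kernel-verified Lean document; each statement's English description precedes it below -/
import Mathlib

section
/- Fix β ∈ N, H ∈ N with (H²) > 0, a real number χ, and t > 0 with t²(H²) > χ; set s := √(t² − χ/(H²)) > 0. Define Ẑ(w) := ⟨e^{β + √(−1)·tH}, w·(1 + (χ/2)ϱ)⟩ and Z(w) := ⟨e^{β + √(−1)·sH}, w⟩ for w ∈ Λ. Then for every w ∈ Λ one has Re Ẑ(w) = Re Z(w) and s·Im Ẑ(w) = t·Im Z(w); equivalently, Ẑ = T⁻¹ ∘ Z for the ℝ-linear map T of ℂ given by T(x + y√(−1)) = x + (s/t)y√(−1). (This is the numerical content of Proposition 2.8: the stability function Ẑ_{(β,tH)} of the stability condition σ̂_{(β,tH)} is obtained from Z_{(β,sH)} by the GL⁺₂(ℝ)-action.) -/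
noncomputable section

namespace MukaiNote

variable {N : Type*} [AddCommGroup N] [Module ℝ N]

/-- The Mukai lattice `Λ = ℝ ⊕ N ⊕ ℝϱ`, as triples `(x₀, x₁, x₂)`. -/
abbrev L (N : Type*) : Type _ := ℝ × N × ℝ

/-- The ring multiplication on `Λ`. -/
def mul (B : N →ₗ[ℝ] N →ₗ[ℝ] ℝ) (u v : L N) : L N :=
  (u.1 * v.1, u.1 • v.2.1 + v.1 • u.2.1, u.1 * v.2.2 + u.2.2 * v.1 + B u.2.1 v.2.1)

/-- The Mukai pairing on `Λ`. -/
def pair (B : N →ₗ[ℝ] N →ₗ[ℝ] ℝ) (u v : L N) : ℝ :=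
  B u.2.1 v.2.1 - u.1 * v.2.2 - u.2.2 * v.1

/-- The exponential class `e^δ = 1 + δ + ((δ²)/2)ϱ` for `δ ∈ N`. -/
def expo (B : N →ₗ[ℝ] N →ₗ[ℝ] ℝ) (δ : N) : L N := (1, δ, B δ δ / 2)

/-- `N ⊗ ℂ`, realized as pairs (real part, imaginary part). -/
abbrev NC (N : Type*) : Type _ := N × N

/-- Scalar multiplication of `ℂ` on `N ⊗ ℂ`. -/
def csmul (z : ℂ) (p : NC N) : NC N :=
  (z.re • p.1 - z.im • p.2, z.im • p.1 + z.re • p.2)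

/-- The `ℂ`-bilinear extension of the symmetric bilinear form `B` to `N ⊗ ℂ`. -/
def BC (B : N →ₗ[ℝ] N →ₗ[ℝ] ℝ) (p q : NC N) : ℂ :=
  ⟨B p.1 q.1 - B p.2 q.2, B p.1 q.2 + B p.2 q.1⟩

/-- The complexified Mukai lattice `Λ_ℂ = ℂ ⊕ (N ⊗ ℂ) ⊕ ℂϱ`. -/
abbrev LC (N : Type*) : Type _ := ℂ × NC N × ℂ

/-- The ring multiplication on `Λ_ℂ`. -/
def mulC (B : N →ₗ[ℝ] N →ₗ[ℝ] ℝ) (u v : LC N) : LC N :=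
  (u.1 * v.1, csmul u.1 v.2.1 + csmul v.1 u.2.1,
    u.1 * v.2.2 + u.2.2 * v.1 + BC B u.2.1 v.2.1)

/-- The Mukai pairing on `Λ_ℂ`. -/
def pairC (B : N →ₗ[ℝ] N →ₗ[ℝ] ℝ) (u v : LC N) : ℂ :=
  BC B u.2.1 v.2.1 - u.1 * v.2.2 - u.2.2 * v.1

/-- The exponential class `e^δ` for `δ ∈ N ⊗ ℂ`. -/
def expC (B : N →ₗ[ℝ] N →ₗ[ℝ] ℝ) (δ : NC N) : LC N := (1, δ, BC B δ δ / 2)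

/-- Multiplication by a complex scalar on `Λ_ℂ`. -/
def smulC (z : ℂ) (u : LC N) : LC N := (z * u.1, csmul z u.2.1, z * u.2.2)

/-- The natural inclusion `Λ → Λ_ℂ`. -/
def inclC (u : L N) : LC N := ((u.1 : ℂ), (u.2.1, 0), (u.2.2 : ℂ))

/-- The componentwise imaginary part `Λ_ℂ → Λ`. -/
def imL (u : LC N) : L N := (u.1.im, u.2.1.2, u.2.2.im)

/-- The componentwise real part `Λ_ℂ → Λ`. -/
def reL (u : LC N) : L N := (u.1.re, u.2.1.1, u.2.2.re)

/-- the stability function `Ẑ_{(β,tH)}` is obtained from `Z_{(β,sH)}`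
by the `GL⁺₂(ℝ)`-action `T(x + y√-1) = x + (s/t)y√-1`, where `s = √(t² - χ/(H²))`. -/
theorem hatZ_vs_Z (B : N →ₗ[ℝ] N →ₗ[ℝ] ℝ) (hB : ∀ x y : N, B x y = B y x)
    (β H : N) (χ t : ℝ) (hH : 0 < B H H) (ht : 0 < t) (htχ : χ < t ^ 2 * B H H)
    (s : ℝ) (hs : s = Real.sqrt (t ^ 2 - χ / B H H)) :
    0 < s ∧
      ∀ w : L N,
        (pairC B (expC B (β, t • H)) (inclC (mul B w (1, 0, χ / 2)))).re =
            (pairC B (expC B (β, s • H)) (inclC w)).re ∧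
          s * (pairC B (expC B (β, t • H)) (inclC (mul B w (1, 0, χ / 2)))).im =
            t * (pairC B (expC B (β, s • H)) (inclC w)).im := by
  have hpos : 0 < t ^ 2 - χ / B H H := by
    have : χ / B H H < t ^ 2 := by
      rw [div_lt_iff₀ hH]; linarith
    linarith
  have hs0 : 0 < s := hs ▸ Real.sqrt_pos.mpr hpos
  have hs2 : s ^ 2 = t ^ 2 - χ / B H H := by
    rw [hs, Real.sq_sqrt hpos.le]
  have hs2' : s ^ 2 * B H H = t ^ 2 * B H H - χ := by
    rw [hs2]; field_simp
  refine ⟨hs0, fun w => ?_⟩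
  obtain ⟨w0, w1, w2⟩ := w
  constructor
  · simp only [pairC, expC, BC, mul, inclC, csmul, map_add, map_smul, map_zero,
      LinearMap.add_apply, LinearMap.smul_apply, LinearMap.zero_apply,
      Complex.sub_re, Complex.mul_re, Complex.ofReal_re, Complex.ofReal_im,
      Complex.div_re, smul_eq_mul, Complex.re_ofNat, Complex.im_ofNat,
      Complex.normSq_ofNat, Complex.one_re, Complex.one_im, Complex.div_im]
    linear_combination (-(w0 / 2)) * hs2'
  · simp only [pairC, expC, BC, mul, inclC, csmul, map_add, map_smul, map_zero,
      LinearMap.add_apply, LinearMap.smul_apply, LinearMap.zero_apply,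
      Complex.sub_im, Complex.mul_im, Complex.ofReal_re, Complex.ofReal_im,
      Complex.mul_re, Complex.div_im, smul_eq_mul, Complex.re_ofNat, Complex.im_ofNat,
      Complex.normSq_ofNat, Complex.one_re, Complex.one_im, Complex.div_re]
    rw [hB H β]; ring

end MukaiNote
end
end

section
/- Assume in addition that Φ : Λ → Λ′ is an isometry for the Mukai pairings, i.e. ⟨Φ(u), Φ(v)⟩′ = ⟨u, v⟩ for all u, v ∈ Λ. Then for every D ∈ N with (D·H) = 0 and (D·f) = 0 there exists D′ ∈ N′ with (D′·H′)′ = 0 and (D′·f′)′ = 0 such that Φ(e^β · D) = e^{β′} · D′. (This is the assertion about the component D ↦ D′ in Lemma 3.2 (coh-FM) of the paper.) -/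
noncomputable section

namespace MukaiNote

variable {N : Type*} [AddCommGroup N] [Module ℝ N]

/-- under the relations (eq:H′) for the cohomological Fourier–Mukai
transform `Φ`, if `Φ` is an isometry for the Mukai pairings, then for every
`D ∈ N` orthogonal to `H` and `f` there is `D′ ∈ N′` orthogonal to `H′` and `f′`
with `Φ(e^β · D) = e^{β′} · D′`. -/
theorem FM_of_orthogonal_class {N' : Type*} [AddCommGroup N'] [Module ℝ N']
    (B : N →ₗ[ℝ] N →ₗ[ℝ] ℝ) (hB : ∀ x y : N, B x y = B y x)
    (B' : N' →ₗ[ℝ] N' →ₗ[ℝ] ℝ) (hB' : ∀ x y : N', B' x y = B' y x)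
    (β H f : N) (β' H' f' : N') (r₀ : ℝ) (hr₀ : r₀ ≠ 0)
    (Φ : L N →ₗ[ℝ] L N')
    (hΦ1 : Φ (r₀ • expo B β) = mul B' (0, H', 0) (expo B' β'))
    (hΦ2 : Φ (mul B (0, H, 0) (expo B β)) = (-r₀) • expo B' β')
    (hΦ3 : Φ (mul B (expo B β) (0, r₀ • f, 0)) = (0, 0, 1))
    (hΦ4 : Φ (0, 0, 1) = - mul B' (expo B' β') (0, r₀ • f', 0))
    (hiso : ∀ u v : L N, pair B' (Φ u) (Φ v) = pair B u v) :
    ∀ D : N, B D H = 0 → B D f = 0 →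
      ∃ D' : N', B' D' H' = 0 ∧ B' D' f' = 0 ∧
        Φ (mul B (expo B β) (0, D, 0)) = mul B' (expo B' β') (0, D', 0) := by
  intro D hDH hDf
  have hfD : B f D = 0 := (hB f D).trans hDf
  have hHD : B H D = 0 := (hB H D).trans hDH
  set u : L N := mul B (expo B β) (0, D, 0) with hu
  have h3 := hiso u (mul B (expo B β) (0, r₀ • f, 0))
  rw [hΦ3] at h3
  have h1 := hiso u (r₀ • expo B β)
  rw [hΦ1] at h1
  have h4 := hiso u ((0, 0, 1) : L N)
  rw [hΦ4] at h4
  have h2 := hiso u (mul B (0, H, 0) (expo B β))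
  rw [hΦ2] at h2
  simp only [pair, mul, expo, hu, map_smul, map_add, LinearMap.add_apply, LinearMap.smul_apply,
    smul_eq_mul, Prod.fst, Prod.snd, one_smul, zero_smul, map_zero, LinearMap.zero_apply,
    mul_zero, zero_mul, mul_one, one_mul, add_zero, zero_add, neg_neg, Prod.fst_neg, Prod.snd_neg, 
     map_neg, LinearMap.neg_apply, smul_add, smul_zero, Prod.smul_fst, Prod.smul_snd, hDf, hDH, neg_zero] at h1 h2 h3 h4
  have hu2 : u = (0, D, B β D) := by simp [hu, mul, expo]
  set a : ℝ := (Φ (0, D, B β D)).1 with haa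
  set E : N' := (Φ (0, D, B β D)).2.1 with hE
  set c : ℝ := (Φ (0, D, B β D)).2.2 with hc0
  have ha : a = 0 := by linarith
  have hEH : B' E H' = 0 := by
    linear_combination h1 - r₀ * hB β D + B' H' β' * ha
  have hEf : B' E f' = 0 := by
    have h4' : r₀ * B' E f' = 0 := by
      linear_combination -h4 + (r₀ * B' β' f') * ha
    exact (mul_eq_zero.mp h4').resolve_left hr₀
  have hc : c = B' β' E := by
    have h2' : r₀ * (c - B' β' E) = 0 := by
      linear_combination h2 - (r₀ * (B' β' β' / 2)) * ha + r₀ * hB' E β'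
    have := (mul_eq_zero.mp h2').resolve_left hr₀
    linarith
  refine ⟨E, hEH, hEf, ?_⟩
  rw [hu2]
  have : Φ (0, D, B β D) = (a, E, c) := rfl
  rw [this, ha, hc]
  simp [mul, expo]

end MukaiNote
end
end

section
/- Let ℓ ∈ ℝ, set v := 1 − ℓϱ and ν := 1 + ℓϱ in Λ. Then for all β, ω ∈ N one has the identity in Λ: Im( conj(⟨e^{β + √(−1)ω}, v⟩) · e^{β + √(−1)ω} ) = (β·ω)·ν + (β·ω)·β + (ℓ + (ω²)/2 − (β²)/2)·ω, where conj denotes complex conjugation of the scalar ⟨e^{β+√(−1)ω}, v⟩ ∈ ℂ and Im is taken componentwise on Λ_ℂ. (This is Lemma 5.2 (Lemma xi) of the paper, computing the polarization class ξ(β,ω) associated to the stability function for the Mukai vector v = 1 − ℓϱ on a K3 surface.) -/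
noncomputable section

namespace MukaiNote

variable {N : Type*} [AddCommGroup N] [Module ℝ N]

/-- Lemma (xi): for `v = 1 - ℓϱ` and `ν = 1 + ℓϱ`,
`Im(conj(⟨e^{β+√-1ω}, v⟩)·e^{β+√-1ω}) = (β·ω)ν + (β·ω)β + (ℓ + (ω²)/2 - (β²)/2)ω`. -/
theorem xi_formula (B : N →ₗ[ℝ] N →ₗ[ℝ] ℝ) (hB : ∀ x y : N, B x y = B y x)
    (ℓ : ℝ) (β ω : N) :
    imL (smulC (starRingEnd ℂ (pairC B (expC B (β, ω)) (inclC (1, 0, -ℓ))))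
        (expC B (β, ω))) =
      (B β ω) • ((1, 0, ℓ) : L N) + (B β ω) • ((0, β, 0) : L N) +
        (ℓ + B ω ω / 2 - B β β / 2) • ((0, ω, 0) : L N) := by
  have hβω := hB β ω
  unfold imL smulC pairC expC inclC BC csmul
  simp only [map_zero, LinearMap.zero_apply, Prod.ext_iff, Prod.smul_mk, Prod.mk_add_mk,
    smul_eq_mul, Prod.fst_add, Prod.snd_add]
  norm_num [Complex.ext_iff, Complex.div_re, Complex.div_im, Complex.normSq]
  refine ⟨by rw [hβω]; ring, ?_, by rw [hβω]; ring⟩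
  rw [hβω]; module

end MukaiNote
end
end

section
/- Let β′, H′, f′ ∈ N with (H′²) = 0, (f′²) = 0, (H′·f′) = 1, let r₀, m, n, t > 0 and ℓ ∈ ℝ with C_t := ℓ + t²n/r₀² − (β′²)/2 ≠ 0, and set ω′ := (1/(r₀² m))H′ + m n f′ and v := 1 − ℓϱ. Let ξ ∈ N with (ξ·f′) = 0 and a ∈ ℝ with a ≠ (β′·ξ), and put u := ξ + aϱ. Then ⟨ Im( conj(⟨e^{β′ + √(−1)tω′}, v⟩)·e^{β′ + √(−1)tω′} ), u ⟩ = 0 if and only if ( (β′·H′)/(r₀² m² n) + (β′·f′) ) / C_t = (H′·ξ) / ( r₀² m² n (a − (β′·ξ)) ). (This is the wall condition ξ(β′, tω′) ∈ u^⊥ in Section 5.2 of the paper, relating Bridgeland walls near the fiber class to the walls for λ-stability.) -/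
noncomputable section

namespace MukaiNote

variable {N : Type*} [AddCommGroup N] [Module ℝ N]

/-- the wall condition `ξ(β′, tω′) ∈ u^⊥` for `u = ξ + aϱ` is
equivalent to the numerical condition relating Bridgeland walls to λ-stability
walls. -/
theorem wall_condition (B : N →ₗ[ℝ] N →ₗ[ℝ] ℝ) (hB : ∀ x y : N, B x y = B y x)
    (β' H' f' : N) (hH' : B H' H' = 0) (hf' : B f' f' = 0) (hHf' : B H' f' = 1)
    (r₀ m n t : ℝ) (hr₀ : 0 < r₀) (hm : 0 < m) (hn : 0 < n) (ht : 0 < t) (ℓ : ℝ)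
    (Ct : ℝ) (hCt : Ct = ℓ + t ^ 2 * n / r₀ ^ 2 - B β' β' / 2) (hCt0 : Ct ≠ 0)
    (ω' : N) (hω' : ω' = (1 / (r₀ ^ 2 * m)) • H' + (m * n) • f')
    (ξ : N) (hξf : B ξ f' = 0) (a : ℝ) (ha : a ≠ B β' ξ) :
    pair B
        (imL (smulC
          (starRingEnd ℂ (pairC B (expC B (β', t • ω')) (inclC (1, 0, -ℓ))))
          (expC B (β', t • ω'))))
        (0, ξ, a) = 0 ↔
      (B β' H' / (r₀ ^ 2 * m ^ 2 * n) + B β' f') / Ct =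
        B H' ξ / (r₀ ^ 2 * m ^ 2 * n * (a - B β' ξ)) := by
  subst hω' hCt
  have hfH : B f' H' = 1 := by rw [hB]; exact hHf'
  have hfξ : B f' ξ = 0 := by rw [hB]; exact hξf
  have hξH : B ξ H' = B H' ξ := hB ξ H'
  have hβξ : B ξ β' = B β' ξ := hB ξ β'
  have hfβ : B f' β' = B β' f' := hB f' β'
  have hHβ : B H' β' = B β' H' := hB H' β'
  simp only [pair, pairC, expC, inclC, smulC, csmul, imL, BC,
    map_add, map_smul, LinearMap.add_apply, LinearMap.smul_apply,
    smul_eq_mul, hH', hf', hHf', hfH, hξf, hfξ, hξH, hβξ, hfβ, hHβ, map_zero, LinearMap.zero_apply,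
    Complex.conj_re, Complex.conj_im, Complex.mul_re, Complex.mul_im,
    Complex.sub_re, Complex.sub_im, Complex.add_re, Complex.add_im,
    Complex.one_re, Complex.one_im, Complex.ofReal_re, Complex.ofReal_im,
    Complex.neg_re, Complex.neg_im, Complex.div_ofNat_re, Complex.div_ofNat_im,
    smul_zero, mul_zero, zero_mul, add_zero, zero_add,
    smul_add, smul_smul]
  have ht0 : t ≠ 0 := ne_of_gt ht
  have hr0 : r₀ ≠ 0 := ne_of_gt hr₀
  have hm0 : m ≠ 0 := ne_of_gt hm
  have hn0 : n ≠ 0 := ne_of_gt hn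
  have has : a - B β' ξ ≠ 0 := sub_ne_zero.mpr ha
  rw [div_eq_div_iff hCt0 (by positivity)]
  constructor
  · intro H
    field_simp at H ⊢
    refine mul_left_cancel₀ ht0 ?_
    linear_combination (-1) * H
  · intro H
    field_simp at H ⊢
    refine mul_left_cancel₀ hn0 ?_
    linear_combination (-(n*t)) * H

end MukaiNote
end
end

section
/- Let u = r + ξ + aϱ ∈ Λ with (ξ·f) = 0 satisfy one of the three conditions: (i) ⟨u²⟩ = −2 and 0 ≤ ⟨v,u⟩ ≤ ℓ; (ii) ⟨u²⟩ = 0 and 0 < ⟨v,u⟩ ≤ ℓ; (iii) ⟨u²⟩ > 0 and 2⟨u²⟩ + 1 ≤ ⟨v,u⟩ ≤ ℓ. Then ra ≥ 0 and ⟨u²⟩ ≤ 0 (so case (iii) cannot occur), and there exists w ∈ {u, v − u, v + u} of the form w = ξ′ + a′ϱ with vanishing rank component and (ξ′·f) = 0 such that either (1) ξ′ ∈ ℤf and −ℓ−1 ≤ a′ ≤ 0, or (2) (ξ′²) = −2 and −ℓ ≤ a′ ≤ 0. (This is the numerical content of Lemma 5.1 (f-wall) of the paper: every wall for v = 1 −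 ℓϱ_X in the positive cone containing the fiber class [f] of an elliptic K3 surface is defined by a rank-zero Mukai vector u = ξ + aϱ with either ξ ∈ ℤf and −ℓ−1 ≤ a ≤ 0, or ±ξ an effective (−2)-divisor in a fiber and −ℓ ≤ a ≤ 0.) -/
noncomputable section

namespace MukaiNote

/-- The integral Mukai lattice `Λ = ℤ ⊕ NS ⊕ ℤϱ`, as triples `(r, ξ, a)`. -/
abbrev LZ (NS : Type*) : Type _ := ℤ × NS × ℤ

/-- The Mukai pairing on `Λ = ℤ ⊕ NS ⊕ ℤϱ`:
`⟨u,u′⟩ = (ξ·ξ′) − ra′ − ar′`. -/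
def pairZ {NS : Type*} [AddCommGroup NS] (B : NS →ₗ[ℤ] NS →ₗ[ℤ] ℤ)
    (u v : LZ NS) : ℤ :=
  B u.2.1 v.2.1 - u.1 * v.2.2 - u.2.2 * v.1

/-- the numerical content of Lemma (f-wall): a Mukai vector
`u = r + ξ + aϱ` with `(ξ·f) = 0` defining a wall for `v = 1 − ℓϱ` through the
fiber class satisfies `ra ≥ 0` and `⟨u²⟩ ≤ 0`, and one of `u`, `v − u`, `v + u`
is a rank-zero vector `ξ′ + a′ϱ` with `(ξ′·f) = 0` and either `ξ′ ∈ ℤf` with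
`−ℓ−1 ≤ a′ ≤ 0`, or `(ξ′²) = −2` with `−ℓ ≤ a′ ≤ 0`. -/
theorem f_wall {NS : Type*} [AddCommGroup NS] [Module.Free ℤ NS]
    [Module.Finite ℤ NS]
    (B : NS →ₗ[ℤ] NS →ₗ[ℤ] ℤ) (hB : ∀ x y : NS, B x y = B y x)
    (f : NS) (hf : B f f = 0)
    (hneg : ∀ ξ : NS, B ξ f = 0 → B ξ ξ ≤ 0)
    (hzero : ∀ ξ : NS, B ξ f = 0 → B ξ ξ = 0 → ∃ k : ℤ, ξ = k • f)
    (ℓ : ℤ) (hℓ : 1 ≤ ℓ)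
    (r a : ℤ) (ξ : NS) (hξf : B ξ f = 0)
    (hcase :
      (pairZ B (r, ξ, a) (r, ξ, a) = -2 ∧
          0 ≤ pairZ B (1, 0, -ℓ) (r, ξ, a) ∧ pairZ B (1, 0, -ℓ) (r, ξ, a) ≤ ℓ) ∨
        (pairZ B (r, ξ, a) (r, ξ, a) = 0 ∧
          0 < pairZ B (1, 0, -ℓ) (r, ξ, a) ∧ pairZ B (1, 0, -ℓ) (r, ξ, a) ≤ ℓ) ∨
        (0 < pairZ B (r, ξ, a) (r, ξ, a) ∧
          2 * pairZ B (r, ξ, a) (r, ξ, a) + 1 ≤ pairZ B (1, 0, -ℓ) (r, ξ, a) ∧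
          pairZ B (1, 0, -ℓ) (r, ξ, a) ≤ ℓ)) :
    0 ≤ r * a ∧ pairZ B (r, ξ, a) (r, ξ, a) ≤ 0 ∧
      ∃ w : LZ NS,
        (w = (r, ξ, a) ∨ w = ((1, 0, -ℓ) : LZ NS) - (r, ξ, a) ∨
          w = ((1, 0, -ℓ) : LZ NS) + (r, ξ, a)) ∧
        ∃ (ξ' : NS) (a' : ℤ), w = (0, ξ', a') ∧ B ξ' f = 0 ∧
          (((∃ k : ℤ, ξ' = k • f) ∧ -ℓ - 1 ≤ a' ∧ a' ≤ 0) ∨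
            (B ξ' ξ' = -2 ∧ -ℓ ≤ a' ∧ a' ≤ 0)) := by

  -- abbreviations
  have hsle : B ξ ξ ≤ 0 := hneg ξ hξf
  have hPP : pairZ B (r, ξ, a) (r, ξ, a) = B ξ ξ - 2 * (r * a) := by
    simp only [pairZ]; ring
  have hPV : pairZ B (1, 0, -ℓ) (r, ξ, a) = ℓ * r - a := by
    simp only [pairZ, map_zero, LinearMap.zero_apply]; ring
  rw [hPP, hPV] at hcase
  -- uniform bounds on P = ℓ r − a
  have hP0 : 0 ≤ ℓ * r - a := by
    rcases hcase with ⟨_, h, _⟩ | ⟨_, h, _⟩ | ⟨h1, h2, _⟩ <;> linarith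
  have hPl : ℓ * r - a ≤ ℓ := by
    rcases hcase with ⟨_, _, h⟩ | ⟨_, _, h⟩ | ⟨_, _, h⟩ <;> linarith
  -- ra ≥ 0
  have hra : 0 ≤ r * a := by
    by_contra h
    push_neg at h
    rcases lt_trichotomy r 0 with hr | hr | hr
    · have ha : 0 < a := by nlinarith
      have h1 : ℓ * r ≤ ℓ * (-1) := by
        apply mul_le_mul_of_nonneg_left (by omega) (by omega)
      linarith
    · simp [hr] at h
    · have ha : a < 0 := by nlinarith
      have h1 : ℓ * 1 ≤ ℓ * r := by
        apply mul_le_mul_of_nonneg_left (by omega) (by omega)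
      linarith
  -- rule out case (iii) and extract the square
  have hqs : B ξ ξ - 2 * (r * a) = -2 ∨ B ξ ξ - 2 * (r * a) = 0 := by
    rcases hcase with ⟨h, _⟩ | ⟨h, _⟩ | ⟨h, _, _⟩
    · exact Or.inl h
    · exact Or.inr h
    · exfalso; linarith
  have hq0 : pairZ B (r, ξ, a) (r, ξ, a) ≤ 0 := by
    rw [hPP]; rcases hqs with h | h <;> linarith
  refine ⟨hra, hq0, ?_⟩
  have hra1 : r * a ≤ 1 := by rcases hqs with h | h <;> linarith
  have hra01 : r * a = 0 ∨ r * a = 1 := by omega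
  rcases hra01 with h01 | h01
  · rcases mul_eq_zero.mp h01 with hr0 | ha0
    · -- r = 0 : take w = u
      subst hr0
      have haB : -ℓ ≤ a ∧ a ≤ 0 := by constructor <;> linarith
      refine ⟨(0, ξ, a), Or.inl rfl, ξ, a, rfl, hξf, ?_⟩
      rcases hqs with h | h
      · exact Or.inr ⟨by linarith, by linarith, haB.2⟩
      · exact Or.inl ⟨hzero ξ hξf (by linarith), by linarith, haB.2⟩
    · -- a = 0 : r = 0 or r = 1
      subst ha0
      have hr01 : r = 0 ∨ r = 1 := by
        rcases lt_trichotomy r 0 with hr | hr | hr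
        · exfalso
          have h1 : ℓ * r ≤ ℓ * (-1) :=
            mul_le_mul_of_nonneg_left (by omega) (by omega)
          linarith
        · exact Or.inl hr
        · rcases eq_or_lt_of_le (by omega : (1:ℤ) ≤ r) with h | h
          · exact Or.inr h.symm
          · exfalso
            have h1 : ℓ * 2 ≤ ℓ * r :=
              mul_le_mul_of_nonneg_left (by omega) (by omega)
            linarith
      rcases hr01 with hr0 | hr1
      · subst hr0
        refine ⟨(0, ξ, 0), Or.inl rfl, ξ, 0, rfl, hξf, ?_⟩
        rcases hqs with h | h
        · exact Or.inr ⟨by linarith, by linarith, le_refl 0⟩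
        · exact Or.inl ⟨hzero ξ hξf (by linarith), by linarith, le_refl 0⟩
      · subst hr1
        have hw : ((1, 0, -ℓ) : LZ NS) - (1, ξ, 0) = (0, -ξ, -ℓ) := by
          simp [Prod.ext_iff]
        refine ⟨(0, -ξ, -ℓ), Or.inr (Or.inl hw.symm), -ξ, -ℓ, rfl, by simp [hξf], ?_⟩
        rcases hqs with h | h
        · refine Or.inr ⟨by simpa using (by linarith : B ξ ξ = -2), le_refl _, by linarith⟩
        · obtain ⟨k, hk⟩ := hzero ξ hξf (by linarith)
          exact Or.inl ⟨⟨-k, by rw [hk]; simp⟩, by linarith, by linarith⟩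
  · -- ra = 1
    have hB0 : B ξ ξ = 0 := by rcases hqs with h | h <;> [skip; (exfalso; linarith)] <;> linarith
    obtain ⟨k, hk⟩ := hzero ξ hξf hB0
    rcases Int.mul_eq_one_iff_eq_one_or_neg_one.mp h01 with ⟨hr1, ha1⟩ | ⟨hr1, ha1⟩
    · subst hr1; subst ha1
      have hw : ((1, 0, -ℓ) : LZ NS) - (1, ξ, 1) = (0, -ξ, -ℓ - 1) := by
        simp [Prod.ext_iff]; try omega
      refine ⟨(0, -ξ, -ℓ - 1), Or.inr (Or.inl hw.symm), -ξ, -ℓ - 1, rfl,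
        by simp [hξf], Or.inl ⟨⟨-k, by rw [hk]; simp⟩, le_refl _, by linarith⟩⟩
    · subst hr1; subst ha1
      have hw : ((1, 0, -ℓ) : LZ NS) + (-1, ξ, -1) = (0, ξ, -ℓ - 1) := by
        simp [Prod.ext_iff]; try omega
      refine ⟨(0, ξ, -ℓ - 1), Or.inr (Or.inr hw.symm), ξ, -ℓ - 1, rfl, hξf,
        Or.inl ⟨⟨k, hk⟩, le_refl _, by linarith⟩⟩


end MukaiNote
end
end
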